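/- Let k ≥ 1 and let θ_k and y_k satisfy the differential equation (Γ_k(-ln y_k))' = k!(1 - 1/(kθ_k)) - Γ_{k+1}(-ln y_k) on (0,1) with boundary conditions y_k(0) = 1 and lim_{t→1⁻} y_k(t) = 0, where y_k: [0,1) → (0,1] is differentiable. Then necessarily θ_k < 1/k and y_k is strictly decreasing on [0,1). -/

import Mathlib

/-- The upper incomplete gamma function `Γ_r(x) = ∫_x^∞ t^{r-1} e^{-t} dt`. -/
noncomputable def uGamma (r : ℕ) (x : ℝ) : ℝ := ∫ t in Set.Ioi x, t ^ (r - 1) * Real.exp (-t)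

/-!
Put `x = -log y`, `F = Γ_k(x)` and `c = k!(1 - 1/(kθ))`, so that `F' = c - Γ_{k+1}(x)` and
`x → ∞` at `1⁻`. If `c > 0`, choose `X` with `Γ_{k+1}(X) < c`: wherever `F < Γ_k(X)` we have
`x > X` and hence `F' > 0`, so `F` never drops below `Γ_k(X) > 0`, contradicting `F → 0`.
If `c = 0`, the chain rule turns the equation into `x' = Γ_{k+1}(x) e^x / x^{k-1} ≤ 2x` for
large `x`, and Grönwall's inequality keeps `x` bounded. Hence `c < 0`, which is `θ < 1/k`,
and then `F' < 0`, so `x` increases and `y` decreases.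
-/

open Set Filter Topology MeasureTheory Real

lemma uGamma_succ (n : ℕ) (x : ℝ) :
    uGamma (n + 1) x = ∫ t in Ioi x, t ^ n * exp (-t) := by
  simp only [uGamma, Nat.add_sub_cancel]

lemma integrableOn_pow_mul_exp_neg_Ioi (n : ℕ) (x : ℝ) :
    IntegrableOn (fun t : ℝ => t ^ n * exp (-t)) (Ioi x) := by
  have h0 : IntegrableOn (fun t : ℝ => t ^ n * exp (-t)) (Ioi 0) :=
    (GammaIntegral_convergent (s := n + 1) (by positivity)).congr_fun
      (fun t _ => by simp only [add_sub_cancel_right, rpow_natCast, mul_comm]) measurableSet_Ioi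
  rcases le_or_gt 0 x with hx | hx
  · exact h0.mono_set (Ioi_subset_Ioi hx)
  · rw [← Ioc_union_Ioi_eq_Ioi hx.le, integrableOn_union]
    exact ⟨(by fun_prop : Continuous fun t : ℝ => t ^ n * exp (-t)).integrableOn_Ioc, h0⟩

lemma uGamma_succ_eq_sub_intervalIntegral (n : ℕ) (x : ℝ) :
    uGamma (n + 1) x = uGamma (n + 1) 0 - ∫ t in (0 : ℝ)..x, t ^ n * exp (-t) := by
  rw [uGamma_succ, uGamma_succ, ← intervalIntegral.integral_Ioi_sub_Ioi'
    (integrableOn_pow_mul_exp_neg_Ioi n 0) (integrableOn_pow_mul_exp_neg_Ioi n x)]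
  ring

lemma hasDerivAt_uGamma_succ (n : ℕ) (x : ℝ) :
    HasDerivAt (uGamma (n + 1)) (-(x ^ n * exp (-x))) x := by
  have hc : Continuous fun t : ℝ => t ^ n * exp (-t) := by fun_prop
  have hint : HasDerivAt (fun u => ∫ t in (0 : ℝ)..u, t ^ n * exp (-t)) (x ^ n * exp (-x)) x :=
    intervalIntegral.integral_hasDerivAt_right (hc.intervalIntegrable 0 x)
      (hc.stronglyMeasurableAtFilter _ _) hc.continuousAt
  rw [funext (uGamma_succ_eq_sub_intervalIntegral n)]
  exact hint.const_sub _

lemma tendsto_uGamma_succ_atTop (n : ℕ) : Tendsto (uGamma (n + 1)) atTop (𝓝 0) := by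
  have h := (intervalIntegral_tendsto_integral_Ioi 0 (integrableOn_pow_mul_exp_neg_Ioi n 0)
    tendsto_id).const_sub (uGamma (n + 1) 0)
  rw [← uGamma_succ, sub_self] at h
  exact h.congr fun x => (uGamma_succ_eq_sub_intervalIntegral n x).symm

lemma uGamma_succ_nonneg (n : ℕ) {x : ℝ} (hx : 0 ≤ x) : 0 ≤ uGamma (n + 1) x := by
  rw [uGamma_succ]
  refine setIntegral_nonneg measurableSet_Ioi fun t ht => ?_
  have : 0 ≤ t := hx.trans (le_of_lt ht)
  positivity

lemma strictAntiOn_uGamma_succ (n : ℕ) : StrictAntiOn (uGamma (n + 1)) (Ici 0) := by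
  refine strictAntiOn_of_deriv_neg (convex_Ici 0)
    (fun t _ => (hasDerivAt_uGamma_succ n t).continuousAt.continuousWithinAt) fun t ht => ?_
  rw [interior_Ici] at ht
  have ht : 0 < t := ht
  rw [(hasDerivAt_uGamma_succ n t).deriv, neg_lt_zero]
  positivity

lemma uGamma_succ_pos (n : ℕ) {x : ℝ} (hx : 0 ≤ x) : 0 < uGamma (n + 1) x :=
  (uGamma_succ_nonneg n (by linarith)).trans_lt
    (strictAntiOn_uGamma_succ n hx (mem_Ici.2 (by linarith)) (lt_add_one x))

lemma uGamma_succ_le (n : ℕ) {x : ℝ} (hx : 2 * n ≤ x) :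
    uGamma (n + 1) x ≤ 2 * (x ^ n * exp (-x)) := by
  set g : ℝ → ℝ := fun z => uGamma (n + 1) z - 2 * (z ^ n * exp (-z))
  have hg : ∀ z, HasDerivAt g
      (-(z ^ n * exp (-z)) - 2 * ((n * z ^ (n - 1) - z ^ n) * exp (-z))) z :=
    fun z => (hasDerivAt_uGamma_succ n z).sub
      ((((hasDerivAt_pow n z).mul (hasDerivAt_neg' z).exp).congr_deriv (by ring)).const_mul 2)
  have hmono : MonotoneOn g (Ici (2 * n)) := by
    refine monotoneOn_of_deriv_nonneg (convex_Ici _)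
      (fun z _ => (hg z).continuousAt.continuousWithinAt)
      (fun z _ => (hg z).differentiableAt.differentiableWithinAt) fun z hz => ?_
    rw [interior_Ici] at hz
    have hz : 2 * (n : ℝ) < z := hz
    have hz0 : 0 < z := lt_of_le_of_lt (by positivity) hz
    have hpow : 2 * n * z ^ (n - 1) ≤ z ^ n := by
      rcases n with _ | m
      · simp
      · rw [Nat.add_sub_cancel, pow_succ]
        push_cast at hz ⊢
        nlinarith [pow_pos hz0 m]
    rw [(hg z).deriv]
    nlinarith [exp_pos (-z)]
  have hlim : Tendsto g atTop (𝓝 0) := by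
    simpa using (tendsto_uGamma_succ_atTop n).sub
      ((tendsto_pow_mul_exp_neg_atTop_nhds_zero n).const_mul 2)
  have : g x ≤ 0 := ge_of_tendsto hlim <| by
    filter_upwards [eventually_ge_atTop x] with z hz
    exact hmono (mem_Ici.2 hx) (mem_Ici.2 (hx.trans hz)) hz
  simpa [g] using this

lemma le_of_deriv_pos_below {f : ℝ → ℝ} {a b L : ℝ} (hab : a ≤ b) (hf : ContinuousOn f (Icc a b))
    (ha : L ≤ f a) (hderiv : ∀ t ∈ Ioo a b, f t < L → 0 < deriv f t) : L ≤ f b := by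
  set S := Icc a b ∩ f ⁻¹' Ici L
  have hS : IsCompact S :=
    isCompact_Icc.of_isClosed_subset (hf.preimage_isClosed_of_isClosed isClosed_Icc isClosed_Ici)
      inter_subset_left
  obtain ⟨⟨has, hsb⟩, hLs⟩ : sSup S ∈ S := hS.sSup_mem ⟨a, ⟨left_mem_Icc.2 hab, ha⟩⟩
  rcases hsb.eq_or_lt with hsb | hsb
  · rwa [← hsb]
  have hbelow : ∀ t ∈ Ioc (sSup S) b, f t < L := fun t ht => not_le.1 fun hLt =>
    ht.1.not_ge (le_csSup hS.bddAbove ⟨⟨has.trans ht.1.le, ht.2⟩, hLt⟩)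
  have hmono : StrictMonoOn f (Icc (sSup S) b) := by
    refine strictMonoOn_of_deriv_pos (convex_Icc _ _) (hf.mono (Icc_subset_Icc_left has))
      fun t ht => ?_
    rw [interior_Icc] at ht
    exact hderiv t ⟨has.trans_lt ht.1, ht.2⟩ (hbelow t ⟨ht.1, ht.2.le⟩)
  exact hLs.trans (hmono (left_mem_Icc.2 hsb.le) (right_mem_Icc.2 hsb.le) hsb).le

lemma not_tendsto_atTop_of_deriv_le_mul {f : ℝ → ℝ} {a b K : ℝ} (hab : a < b)
    (hf : ∀ t ∈ Ico a b, DifferentiableAt ℝ f t) (hbound : ∀ t ∈ Ico a b, deriv f t ≤ K * f t) :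
    ¬ Tendsto f (𝓝[<] b) atTop := by
  intro htop
  have hgron : ∀ s ∈ Ico a b, f s ≤ |f a| * exp (|K| * (b - a)) := by
    intro s hs
    have hsub : Icc a s ⊆ Ico a b := Icc_subset_Ico_right hs.2
    have h := le_gronwallBound_of_liminf_deriv_right_le (f' := deriv f) (ε := 0)
      (fun t ht => (hf t (hsub ht)).continuousAt.continuousWithinAt)
      (fun t ht _ hr => (hf t (hsub (Ico_subset_Icc_self ht))).hasDerivAt.hasDerivWithinAt
        |>.liminf_right_slope_le hr)
      (le_abs_self (f a)) (fun t ht => by simpa using hbound t (hsub (Ico_subset_Icc_self ht)))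
      s (right_mem_Icc.2 hs.1)
    rw [gronwallBound_ε0] at h
    refine h.trans (mul_le_mul_of_nonneg_left (exp_le_exp.2 ?_) (abs_nonneg _))
    exact mul_le_mul (le_abs_self K) (by linarith [hs.2]) (by linarith [hs.1]) (abs_nonneg K)
  obtain ⟨s, hs_big, hs⟩ := ((htop.eventually_gt_atTop (|f a| * exp (|K| * (b - a)))).and
    (Ioo_mem_nhdsLT hab)).exists
  exact (hgron s ⟨hs.1.le, hs.2⟩).not_gt hs_big

lemma continuous_uGamma_succ (n : ℕ) : Continuous (uGamma (n + 1)) :=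
  continuous_iff_continuousAt.2 fun x => (hasDerivAt_uGamma_succ n x).continuousAt

/-- `x = -log y` for a solution `y` of the paper's equation, with `k = n + 1` and
`c = k!(1 - 1/(kθ))`. -/
structure IsGammaODESolution (n : ℕ) (c : ℝ) (x : ℝ → ℝ) : Prop where
  nonneg : ∀ t ∈ Ico (0 : ℝ) 1, 0 ≤ x t
  differentiableAt : ∀ t ∈ Ico (0 : ℝ) 1, DifferentiableAt ℝ x t
  deriv_eq : ∀ t ∈ Ioo (0 : ℝ) 1,
    deriv (fun s => uGamma (n + 1) (x s)) t = c - uGamma (n + 2) (x t)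

namespace IsGammaODESolution

variable {n : ℕ} {c : ℝ} {x : ℝ → ℝ}

lemma continuousOn_uGamma_comp (h : IsGammaODESolution n c x) :
    ContinuousOn (fun s => uGamma (n + 1) (x s)) (Ico 0 1) :=
  (continuous_uGamma_succ n).comp_continuousOn fun t ht =>
    (h.differentiableAt t ht).continuousAt.continuousWithinAt

lemma strictMonoOn (h : IsGammaODESolution n c x) (hc : c ≤ 0) : StrictMonoOn x (Ico 0 1) := by
  have hF : StrictAntiOn (fun s => uGamma (n + 1) (x s)) (Ico 0 1) := by
    refine strictAntiOn_of_deriv_neg (convex_Ico 0 1) h.continuousOn_uGamma_comp fun t ht => ?_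
    rw [interior_Ico] at ht
    rw [h.deriv_eq t ht]
    linarith [uGamma_succ_pos (n + 1) (h.nonneg t ⟨ht.1.le, ht.2⟩)]
  intro s hs t ht hst
  exact ((strictAntiOn_uGamma_succ n).lt_iff_gt (h.nonneg t ht) (h.nonneg s hs)).1 (hF hs ht hst)

lemma not_tendsto_atTop_of_eq_zero (h : IsGammaODESolution n c x) (hc : c = 0) :
    ¬ Tendsto x (𝓝[<] 1) atTop := by
  intro hxtop
  have hmono := h.strictMonoOn hc.le
  obtain ⟨t₀, hxt₀, ht₀⟩ := ((hxtop.eventually_ge_atTop (2 * ((n : ℝ) + 1))).and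
    (Ioo_mem_nhdsLT zero_lt_one)).exists
  have hIco : ∀ t ∈ Ico t₀ 1, t ∈ Ico (0 : ℝ) 1 := fun t ht => ⟨ht₀.1.le.trans ht.1, ht.2⟩
  refine not_tendsto_atTop_of_deriv_le_mul (K := 2) ht₀.2
    (fun t ht => h.differentiableAt t (hIco t ht)) (fun t ht => ?_) hxtop
  have hxt : 2 * ((n : ℝ) + 1) ≤ x t :=
    hxt₀.trans (hmono.monotoneOn ⟨ht₀.1.le, ht₀.2⟩ (hIco t ht) ht.1)
  have hchain : deriv (fun s => uGamma (n + 1) (x s)) t = -(x t ^ n * exp (-x t)) * deriv x t :=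
    ((hasDerivAt_uGamma_succ n (x t)).comp t (h.differentiableAt t (hIco t ht)).hasDerivAt).deriv
  have hode := h.deriv_eq t ⟨ht₀.1.trans_le ht.1, ht.2⟩
  rw [hchain, hc] at hode
  have hkey : x t ^ n * exp (-x t) * deriv x t ≤ x t ^ n * exp (-x t) * (2 * x t) :=
    calc x t ^ n * exp (-x t) * deriv x t = uGamma (n + 2) (x t) := by linarith
      _ ≤ 2 * (x t ^ (n + 1) * exp (-x t)) := uGamma_succ_le (n + 1) (by push_cast; linarith)
      _ = x t ^ n * exp (-x t) * (2 * x t) := by ring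
  have hxpos : 0 < x t := by linarith
  exact le_of_mul_le_mul_left hkey (by positivity)

lemma not_tendsto_atTop_of_pos (h : IsGammaODESolution n c x) (hc : 0 < c) :
    ¬ Tendsto x (𝓝[<] 1) atTop := by
  intro hxtop
  obtain ⟨X, hXc, hX⟩ := (((tendsto_uGamma_succ_atTop (n + 1)).eventually (gt_mem_nhds hc)).and
    (eventually_ge_atTop (x 0))).exists
  have hx0 := h.nonneg 0 ⟨le_rfl, zero_lt_one⟩
  have hX0 : 0 ≤ X := hx0.trans hX
  have hbarrier : ∀ b ∈ Ioo (0 : ℝ) 1, uGamma (n + 1) X ≤ uGamma (n + 1) (x b) := by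
    intro b hb
    refine le_of_deriv_pos_below (f := fun s => uGamma (n + 1) (x s)) hb.1.le
      (h.continuousOn_uGamma_comp.mono (Icc_subset_Ico_right hb.2))
      ((strictAntiOn_uGamma_succ n).antitoneOn hx0 hX0 hX) fun t ht hFt => ?_
    have htI : t ∈ Ioo (0 : ℝ) 1 := ⟨ht.1, ht.2.trans hb.2⟩
    have hXt : X < x t :=
      ((strictAntiOn_uGamma_succ n).lt_iff_gt (h.nonneg t ⟨htI.1.le, htI.2⟩) hX0).1 hFt
    rw [h.deriv_eq t htI, sub_pos]
    exact ((strictAntiOn_uGamma_succ (n + 1)) hX0 (hX0.trans hXt.le) hXt).trans hXc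
  obtain ⟨b, hbF, hb⟩ := ((((tendsto_uGamma_succ_atTop n).comp hxtop).eventually
    (gt_mem_nhds (uGamma_succ_pos n hX0))).and (Ioo_mem_nhdsLT zero_lt_one)).exists
  exact (hbarrier b hb).not_gt hbF

lemma neg_of_tendsto_atTop (h : IsGammaODESolution n c x) (hxtop : Tendsto x (𝓝[<] 1) atTop) :
    c < 0 := by
  rcases lt_trichotomy c 0 with hc | hc | hc
  · exact hc
  · exact absurd hxtop (h.not_tendsto_atTop_of_eq_zero hc)
  · exact absurd hxtop (h.not_tendsto_atTop_of_pos hc)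

end IsGammaODESolution

lemma lt_one_div_of_one_sub_one_div_mul_neg {a θ : ℝ} (ha : 0 < a) (h : 1 - 1 / (a * θ) < 0) :
    θ < 1 / a := by
  have hpos : 0 < a * θ := not_le.1 fun hle => by linarith [one_div_nonpos.2 hle]
  have hlt : a * θ < 1 := (one_lt_div hpos).1 (by linarith)
  rw [lt_div_iff₀ ha]
  linarith [mul_comm a θ]

theorem stmt10_general (k : ℕ) (hk : 1 ≤ k) (θ : ℝ)
    (y : ℝ → ℝ)
    (hyval : ∀ t ∈ Set.Ico (0 : ℝ) 1, y t ∈ Set.Ioc (0 : ℝ) 1)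
    (hydiff : ∀ t ∈ Set.Ico (0 : ℝ) 1, DifferentiableAt ℝ y t)
    (hy1 : Filter.Tendsto y (nhdsWithin 1 (Set.Iio 1)) (nhds 0))
    (hode : ∀ t ∈ Set.Ioo (0 : ℝ) 1,
      deriv (fun s => uGamma k (-Real.log (y s))) t
        = (Nat.factorial k : ℝ) * (1 - 1 / (k * θ)) - uGamma (k + 1) (-Real.log (y t))) :
    θ < 1 / k ∧ StrictAntiOn y (Set.Ico 0 1) := by
  obtain ⟨n, rfl⟩ : ∃ n, k = n + 1 := ⟨k - 1, by omega⟩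
  have hsol : IsGammaODESolution n _ (fun s => -log (y s)) :=
    ⟨fun t ht => neg_nonneg.2 (log_nonpos (hyval t ht).1.le (hyval t ht).2),
      fun t ht => ((hydiff t ht).log (hyval t ht).1.ne').neg, hode⟩
  have hxtop : Tendsto (fun s => -log (y s)) (𝓝[<] 1) atTop := by
    have hy1' : Tendsto y (𝓝[<] 1) (𝓝[>] 0) :=
      tendsto_nhdsWithin_of_tendsto_nhds_of_eventually_within _ hy1 <| by
        filter_upwards [Ioo_mem_nhdsLT zero_lt_one] with t ht using (hyval t ⟨ht.1.le, ht.2⟩).1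
    exact tendsto_neg_atBot_atTop.comp (tendsto_log_nhdsGT_zero.comp hy1')
  have hc := hsol.neg_of_tendsto_atTop hxtop
  refine ⟨lt_one_div_of_one_sub_one_div_mul_neg (by positivity)
    (neg_of_mul_neg_right hc (by positivity)), fun s hs t ht hst => ?_⟩
  have hlog : -log (y s) < -log (y t) := hsol.strictMonoOn hc.le hs ht hst
  exact (log_lt_log_iff (hyval t ht).1 (hyval s hs).1).1 (by linarith)

/-- If `θ_k > 0` and `y_k` satisfy the differential equation
`(Γ_k(-ln y_k))' = k!(1 - 1/(kθ_k)) - Γ_{k+1}(-ln y_k)` on `(0,1)` with `y_k(0) = 1` and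
`y_k(t) → 0` as `t → 1⁻`, then necessarily `θ_k < 1/k` and `y_k` is strictly decreasing
on `[0,1)`. -/
theorem stmt10 (k : ℕ) (hk : 1 ≤ k) (θ : ℝ) (hθ : 0 < θ)
    (y : ℝ → ℝ)
    (hyval : ∀ t ∈ Set.Ico (0 : ℝ) 1, y t ∈ Set.Ioc (0 : ℝ) 1)
    (hydiff : ∀ t ∈ Set.Ico (0 : ℝ) 1, DifferentiableAt ℝ y t)
    (hy0 : y 0 = 1)
    (hy1 : Filter.Tendsto y (nhdsWithin 1 (Set.Iio 1)) (nhds 0))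
    (hode : ∀ t ∈ Set.Ioo (0 : ℝ) 1,
      deriv (fun s => uGamma k (-Real.log (y s))) t
        = (Nat.factorial k : ℝ) * (1 - 1 / (k * θ)) - uGamma (k + 1) (-Real.log (y t))) :
    θ < 1 / k ∧ StrictAntiOn y (Set.Ico 0 1) :=
  stmt10_general k hk θ y hyval hydiff hy1 hode
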